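/- Let n ≥ 2k, let q be a prime power, and let S be a nonempty proper subset of {0,1,...,k-1} with s := min(S). In the generalized Grassmann graph J_{q,S}(n,k), any two vertices v, w with dim(v ∩ w) = t < s satisfy dist(v,w) = ⌈(k-t)/(k-s)⌉, and any two vertices with dim(v ∩ w) ≥ s and v ≠ w satisfy dist(v,w) ≤ 2. -/

import Mathlib

open Finset

namespace ZFPaper

variable {V : Type*}

/-- Zero forcing propagation: `Forces G B v` means `v` eventually gets colored black
starting from the initially black set `B`. -/
inductive Forces (G : SimpleGraph V) (B : Set V) : V → Prop
  | init (v : V) : v ∈ B → Forces G B v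
  | force (u v : V) : G.Adj u v → Forces G B u →
      (∀ w, G.Adj u w → w ≠ v → Forces G B w) → Forces G B v

/-- `B` is a zero forcing set of `G`. -/
def IsZeroForcingSet (G : SimpleGraph V) (B : Set V) : Prop := ∀ v, Forces G B v

/-- The zero forcing number `Z(G)`. -/
noncomputable def zeroForcingNumber (G : SimpleGraph V) : ℕ :=
  sInf {m | ∃ B : Finset V, B.card = m ∧ IsZeroForcingSet G ↑B}

/-- The total zero forcing number `Z_t(G)`. -/
noncomputable def totalZeroForcingNumber (G : SimpleGraph V) : ℕ :=
  sInf {m | ∃ B : Finset V, B.card = m ∧ IsZeroForcingSet G ↑B ∧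
    ∀ v ∈ B, ∃ u ∈ B, G.Adj v u}

/-- The connected zero forcing number `Z_c(G)`. -/
noncomputable def connectedZeroForcingNumber (G : SimpleGraph V) : ℕ :=
  sInf {m | ∃ B : Finset V, B.card = m ∧ IsZeroForcingSet G ↑B ∧
    (G.induce (↑B : Set V)).Connected}

/-- The closed neighborhood of a vertex. -/
def closedNbhd (G : SimpleGraph V) (v : V) : Set V := G.neighborSet v ∪ {v}

/-- A Z-Grundy dominating sequence: each vertex has an open neighbor not yet dominated,
and at the end every vertex is dominated. -/
def IsZGrundySeq (G : SimpleGraph V) (l : List V) : Prop :=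
  (∀ i : Fin l.length,
    ((G.neighborSet (l.get i)) \
      (⋃ j : Fin l.length, ⋃ _ : (j : ℕ) < (i : ℕ), closedNbhd G (l.get j))).Nonempty) ∧
  ∀ v : V, ∃ i : Fin l.length, v ∈ closedNbhd G (l.get i)

/-- The Z-Grundy domination number `γ_gr^Z(G)`. -/
noncomputable def zGrundyNumber (G : SimpleGraph V) : ℕ :=
  sSup {m | ∃ l : List V, IsZGrundySeq G l ∧ l.length = m}

/-- The generalized Johnson graph `J_S(n,k)`. -/
def genJohnson (n k : ℕ) (S : Finset ℕ) :
    SimpleGraph {A : Finset (Fin n) // A.card = k} where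
  Adj v w := v ≠ w ∧ (v.1 ∩ w.1).card ∈ S
  symm := by
    constructor
    rintro v w ⟨h1, h2⟩
    exact ⟨h1.symm, by rwa [Finset.inter_comm]⟩
  loopless := by constructor; rintro v ⟨h1, -⟩; exact h1 rfl

/-- The generalized Grassmann graph `J_{q,S}(n,k)` over a finite field `F` of order `q`. -/
def genGrassmann (F : Type*) [Field F] (n k : ℕ) (S : Finset ℕ) :
    SimpleGraph {W : Submodule F (Fin n → F) // Module.finrank F W = k} where
  Adj v w := v ≠ w ∧ Module.finrank F ↥(v.1 ⊓ w.1) ∈ S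
  symm := by
    constructor
    rintro v w ⟨h1, h2⟩
    exact ⟨h1.symm, by rwa [inf_comm w.1 v.1]⟩
  loopless := by constructor; rintro v ⟨h1, -⟩; exact h1 rfl

/-- The Hamming graph `H(n,q)`. -/
def hammingGraph (n q : ℕ) : SimpleGraph (Fin n → Fin q) where
  Adj x y := hammingDist x y = 1
  symm := ⟨fun x y (h : hammingDist x y = 1) => show hammingDist y x = 1 by rwa [hammingDist_comm]⟩
  loopless := ⟨fun x (h : hammingDist x x = 1) => by simp only [hammingDist_self] at h; exact absurd h (by norm_num)⟩


section DistAux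

open Module Submodule Set

variable {F : Type} [Field F] {V : Type} [AddCommGroup V] [Module F V]

private lemma aux_relcompl (q u : Submodule F V) (hqu : q ≤ u) :
    ∃ X : Submodule F V, q ⊓ X = ⊥ ∧ q ⊔ X = u := by
  obtain ⟨C, hC⟩ := Submodule.exists_isCompl (q.comap u.subtype)
  have hq : (q.comap u.subtype).map u.subtype = q := by
    rw [Submodule.map_comap_eq, Submodule.range_subtype, inf_eq_right.mpr hqu]
  refine ⟨C.map u.subtype, ?_, ?_⟩
  · rw [← hq, ← Submodule.map_inf _ (Submodule.injective_subtype u), hC.inf_eq_bot,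
      Submodule.map_bot]
  · rw [← hq, ← Submodule.map_sup, hC.sup_eq_top, Submodule.map_top, Submodule.range_subtype]

private lemma aux_basis (X : Submodule F V) [FiniteDimensional F X] {r : ℕ}
    (hX : finrank F X = r) :
    ∃ e : Fin r → V, LinearIndependent F e ∧ span F (Set.range e) = X := by
  let b := Module.finBasisOfFinrankEq F X hX
  refine ⟨fun i => (b i : V), ?_, ?_⟩
  · exact b.linearIndependent.map' X.subtype (Submodule.ker_subtype X)
  · have h : Set.range (fun i => (b i : V)) = X.subtype '' Set.range b := by
      rw [← Set.range_comp]; rfl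
    rw [h, Submodule.span_image, b.span_eq, Submodule.map_top, Submodule.range_subtype]

private lemma aux_eval {ι : Type} (B : Basis ι F V) {γ : ℕ} (x y : Fin γ → ι) (hyinj : Function.Injective y) (hxy : ∀ l l', x l ≠ y l')
    (T0 : Set ι) (hyT : ∀ l, y l ∉ T0) {z0 : V} (hz0 : z0 ∈ span F (B '' T0))
    (c : Fin γ → F) (l₀ : Fin γ) :
    B.repr (z0 + ∑ l, c l • (B (x l) + B (y l))) (y l₀) = c l₀ := by
  have h0 : B.repr z0 (y l₀) = 0 := by
    by_contra h
    exact hyT l₀ (B.mem_span_image.mp hz0 (Finsupp.mem_support_iff.mpr h))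
  rw [map_add, Finsupp.add_apply, h0, zero_add, map_sum, Finsupp.finset_sum_apply]
  rw [Finset.sum_eq_single l₀]
  · simp [Basis.repr_self, Finsupp.single_apply, (hxy l₀ l₀)]
  · intro l _ hl
    have h1 : x l ≠ y l₀ := hxy l l₀
    have h2 : y l ≠ y l₀ := fun h => hl (hyinj h)
    simp [Basis.repr_self, Finsupp.single_apply, h1, h2]
  · intro h; exact absurd (Finset.mem_univ l₀) h

private lemma aux_indep_diag {ι : Type} (B : Basis ι F V) {γ : ℕ} (x y : Fin γ → ι) (hyinj : Function.Injective y) (hxy : ∀ l l', x l ≠ y l') :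
    LinearIndependent F (fun l => B (x l) + B (y l)) := by
  rw [Fintype.linearIndependent_iff]
  intro c hc l₀
  have h := aux_eval B x y hyinj hxy ∅ (fun _ => notMem_empty _)
    (z0 := 0) (Submodule.zero_mem _) c l₀
  rw [zero_add, hc] at h
  simpa using h.symm

private lemma aux_disjoint_diag {ι : Type} (B : Basis ι F V) {γ : ℕ} (x y : Fin γ → ι) (hyinj : Function.Injective y) (hxy : ∀ l l', x l ≠ y l')
    (T0 : Set ι) (hyT : ∀ l, y l ∉ T0) :
    Disjoint (span F (B '' T0)) (span F (Set.range fun l => B (x l) + B (y l))) := by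
  rw [Submodule.disjoint_def]
  intro z hz1 hz2
  obtain ⟨c, rfl⟩ := (mem_span_range_iff_exists_fun F).mp hz2
  have hc : ∀ l, c l = 0 := by
    intro l
    have h := aux_eval B x y hyinj hxy T0 hyT (z0 := 0) (Submodule.zero_mem _) c l
    rw [zero_add] at h
    rw [← h]
    have hsup := B.mem_span_image.mp hz1
    by_contra hne
    exact hyT l (hsup (Finsupp.mem_support_iff.mpr hne))
  simp [hc]

private lemma aux_inter {ι : Type} (B : Basis ι F V) {γ : ℕ} (x y : Fin γ → ι) (hyinj : Function.Injective y) (hxy : ∀ l l', x l ≠ y l')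
    (T0 Su : Set ι) (hyT : ∀ l, y l ∉ T0) (hyS : ∀ l, y l ∉ Su) :
    (span F (B '' T0) ⊔ span F (Set.range fun l => B (x l) + B (y l))) ⊓ span F (B '' Su)
      = span F (B '' (T0 ∩ Su)) := by
  apply le_antisymm
  · intro z hz
    obtain ⟨hz1, hz2⟩ := Submodule.mem_inf.mp hz
    obtain ⟨z0, hz0, zd, hzd, rfl⟩ := Submodule.mem_sup.mp hz1
    obtain ⟨c, rfl⟩ := (mem_span_range_iff_exists_fun F).mp hzd
    have hc : ∀ l, c l = 0 := by
      intro l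
      have h := aux_eval B x y hyinj hxy T0 hyT hz0 c l
      rw [← h]
      have hsup := B.mem_span_image.mp hz2
      by_contra hne
      exact hyS l (hsup (Finsupp.mem_support_iff.mpr hne))
    have hz' : z0 + ∑ l, c l • (B (x l) + B (y l)) = z0 := by simp [hc]
    rw [hz'] at hz2 ⊢
    rw [B.mem_span_image] at hz0 hz2 ⊢
    exact subset_inter hz0 hz2
  · refine le_inf (le_trans ?_ le_sup_left) ?_
    · exact span_mono (image_mono inter_subset_left)
    · exact span_mono (image_mono inter_subset_right)

private lemma master [FiniteDimensional F V] (u w : Submodule F V)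
    (k d p a b' g f : ℕ)
    (hu : finrank F u = k) (hw : finrank F w = k) (hd : finrank F ↥(u ⊓ w) = d)
    (hp : p ≤ d) (ha : d + a + g ≤ k) (hb : d + b' + g ≤ k) (hf : 2 * k + f ≤ finrank F V + d) :
    ∃ u' : Submodule F V,
      finrank F ↥u' = p + a + b' + g + f ∧
      finrank F ↥(u' ⊓ u) = p + a ∧ finrank F ↥(u' ⊓ w) = p + b' := by
  classical
  have hdk : d ≤ k := by
    rw [← hd, ← hu]; exact Submodule.finrank_mono inf_le_left
  obtain ⟨r, hr⟩ : ∃ r, d + r = k := ⟨k - d, by omega⟩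
  obtain ⟨X0, hX0b, hX0s⟩ := aux_relcompl (u ⊓ w) u inf_le_left
  obtain ⟨Y0, hY0b, hY0s⟩ := aux_relcompl (u ⊓ w) w inf_le_right
  obtain ⟨E, hE⟩ := Submodule.exists_isCompl (u ⊔ w)
  have hsupuw : finrank F ↥(u ⊔ w) + d = k + k := by
    have h1 := Submodule.finrank_sup_add_finrank_inf_eq u w
    omega
  have hX0r : finrank F X0 = r := by
    have h1 := Submodule.finrank_sup_add_finrank_inf_eq (u ⊓ w) X0
    rw [hX0s, hX0b, hu, hd, finrank_bot] at h1
    omega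
  have hY0r : finrank F Y0 = r := by
    have h1 := Submodule.finrank_sup_add_finrank_inf_eq (u ⊓ w) Y0
    rw [hY0s, hY0b, hw, hd, finrank_bot] at h1
    omega
  set m := finrank F E with hmdef
  have hEtot : finrank F ↥(u ⊔ w) + m = finrank F V := by
    rw [hmdef]; exact Submodule.finrank_add_eq_of_isCompl hE
  have hm : d + r + r + m = finrank F V := by omega
  have hfm : f ≤ m := by omega
  -- families
  obtain ⟨e0, he0i, he0s⟩ := aux_basis (u ⊓ w) hd
  obtain ⟨eX, heXi, heXs⟩ := aux_basis X0 hX0r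
  obtain ⟨eY, heYi, heYs⟩ := aux_basis Y0 hY0r
  obtain ⟨eZ, heZi, heZs⟩ := aux_basis E rfl
  have h1 : LinearIndependent F (Sum.elim e0 eX) :=
    he0i.sum_type heXi (by rw [he0s, heXs]; exact disjoint_iff.mpr hX0b)
  have hsp1 : span F (Set.range (Sum.elim e0 eX)) = u := by
    rw [Set.Sum.elim_range, Submodule.span_union, he0s, heXs, hX0s]
  have hY0w : Y0 ≤ w := by rw [← hY0s]; exact le_sup_right
  have hdisj2 : Disjoint u Y0 := by
    rw [disjoint_iff, ← hY0b]
    apply le_antisymm _ (le_inf (le_trans inf_le_left inf_le_left) inf_le_right)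
    exact le_inf (le_inf inf_le_left (le_trans inf_le_right hY0w)) inf_le_right
  have h2 : LinearIndependent F (Sum.elim (Sum.elim e0 eX) eY) :=
    h1.sum_type heYi (by rw [hsp1, heYs]; exact hdisj2)
  have hsp2 : span F (Set.range (Sum.elim (Sum.elim e0 eX) eY)) = u ⊔ w := by
    rw [Set.Sum.elim_range, Submodule.span_union, hsp1, heYs]
    apply le_antisymm (sup_le le_sup_left (le_trans hY0w le_sup_right))
    apply sup_le le_sup_left
    rw [← hY0s]
    exact sup_le (le_trans inf_le_left le_sup_left) le_sup_right
  have h3 : LinearIndependent F (Sum.elim (Sum.elim (Sum.elim e0 eX) eY) eZ) :=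
    h2.sum_type heZi (by rw [hsp2, heZs]; exact hE.disjoint)
  have hsp3 : span F (Set.range (Sum.elim (Sum.elim (Sum.elim e0 eX) eY) eZ)) = ⊤ := by
    rw [Set.Sum.elim_range, Submodule.span_union, hsp2, heZs]
    exact hE.codisjoint.eq_top
  set ι := ((Fin d ⊕ Fin r) ⊕ Fin r) ⊕ Fin m with hιdef
  let B : Basis ι F V := Basis.mk h3 (le_of_eq hsp3.symm)
  have hBc : ⇑B = Sum.elim (Sum.elim (Sum.elim e0 eX) eY) eZ := Basis.coe_mk _ _
  let jD : Fin d → ι := fun i => Sum.inl (Sum.inl (Sum.inl i))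
  let jX : Fin r → ι := fun i => Sum.inl (Sum.inl (Sum.inr i))
  let jY : Fin r → ι := fun i => Sum.inl (Sum.inr i)
  let jZ : Fin m → ι := fun i => Sum.inr i
  have har : a ≤ r := by omega
  have hbr : b' ≤ r := by omega
  let σ : (Fin p ⊕ Fin a) ⊕ (Fin b' ⊕ Fin f) → ι := Sum.elim
      (Sum.elim (fun i => jD (Fin.castLE hp i)) (fun i => jX (Fin.castLE har i)))
      (Sum.elim (fun i => jY (Fin.castLE hbr i)) (fun i => jZ (Fin.castLE hfm i)))
  let xh : Fin g → ι := fun l => jX ⟨a + l, by omega⟩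
  let yh : Fin g → ι := fun l => jY ⟨b' + l, by omega⟩
  have hjD : Function.Injective jD := fun i j h =>
    Sum.inl_injective (Sum.inl_injective (Sum.inl_injective h))
  have hjX : Function.Injective jX := fun i j h =>
    Sum.inr_injective (Sum.inl_injective (Sum.inl_injective h))
  have hjY : Function.Injective jY := fun i j h =>
    Sum.inr_injective (Sum.inl_injective h)
  have hjZ : Function.Injective jZ := fun i j h =>
    Sum.inr_injective h
  have hσ1 : Function.Injective
      (Sum.elim (fun i => jD (Fin.castLE hp i)) (fun i => jX (Fin.castLE har i))) := by
    apply Function.Injective.sumElim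
      (hjD.comp (Fin.castLE_injective hp)) (hjX.comp (Fin.castLE_injective har))
    intro i j h
    exact Sum.noConfusion rfl rfl (heq_of_eq (Sum.inl_injective (Sum.inl_injective h)))
  have hσ2 : Function.Injective
      (Sum.elim (fun i => jY (Fin.castLE hbr i)) (fun i => jZ (Fin.castLE hfm i))) := by
    apply Function.Injective.sumElim
      (hjY.comp (Fin.castLE_injective hbr)) (hjZ.comp (Fin.castLE_injective hfm))
    intro i j h
    exact Sum.noConfusion rfl rfl (heq_of_eq h)
  have hσinj : Function.Injective σ := by
    apply Function.Injective.sumElim hσ1 hσ2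
    rintro (i|i) (j|j) h <;>
      first
        | exact Sum.noConfusion rfl rfl (heq_of_eq h)
        | exact Sum.noConfusion rfl rfl (heq_of_eq (Sum.inl_injective h))
  have hxyne : ∀ l l' : Fin g, xh l ≠ yh l' := fun l l' h =>
    Sum.noConfusion rfl rfl (heq_of_eq (Sum.inl_injective h))
  have hyxne : ∀ l l' : Fin g, yh l ≠ xh l' := fun l l' h =>
    Sum.noConfusion rfl rfl (heq_of_eq (Sum.inl_injective h))
  have hyinj : Function.Injective yh := by
    intro l l' h
    have h3 : b' + (l : ℕ) = b' + (l' : ℕ) := congrArg Fin.val (hjY h)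
    exact Fin.ext (by omega)
  have hxinj : Function.Injective xh := by
    intro l l' h
    have h3 : a + (l : ℕ) = a + (l' : ℕ) := congrArg Fin.val (hjX h)
    exact Fin.ext (by omega)
  have hyT : ∀ l : Fin g, yh l ∉ Set.range σ := by
    rintro l ⟨(i|i)|(i|i), hi⟩
    · exact Sum.noConfusion rfl rfl (heq_of_eq (Sum.inl_injective hi))
    · exact Sum.noConfusion rfl rfl (heq_of_eq (Sum.inl_injective hi))
    · have h3 := congrArg Fin.val (hjY hi)
      have h4 := i.isLt
      simp only [Fin.coe_castLE] at h3
      omega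
    · exact Sum.noConfusion rfl rfl (heq_of_eq hi)
  have hyS : ∀ l : Fin g, yh l ∉ Set.range jD ∪ Set.range jX := by
    rintro l (⟨i, hi⟩|⟨i, hi⟩)
    · exact Sum.noConfusion rfl rfl (heq_of_eq (Sum.inl_injective hi))
    · exact Sum.noConfusion rfl rfl (heq_of_eq (Sum.inl_injective hi))
  have hxT : ∀ l : Fin g, xh l ∉ Set.range σ := by
    rintro l ⟨(i|i)|(i|i), hi⟩
    · exact Sum.noConfusion rfl rfl (heq_of_eq (Sum.inl_injective (Sum.inl_injective hi)))
    · have h3 := congrArg Fin.val (hjX hi)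
      have h4 := i.isLt
      simp only [Fin.coe_castLE] at h3
      omega
    · exact Sum.noConfusion rfl rfl (heq_of_eq (Sum.inl_injective hi))
    · exact Sum.noConfusion rfl rfl (heq_of_eq hi)
  have hxSw : ∀ l : Fin g, xh l ∉ Set.range jD ∪ Set.range jY := by
    rintro l (⟨i, hi⟩|⟨i, hi⟩)
    · exact Sum.noConfusion rfl rfl (heq_of_eq (Sum.inl_injective (Sum.inl_injective hi)))
    · exact Sum.noConfusion rfl rfl (heq_of_eq (Sum.inl_injective hi))
  have hUspan : span F (B '' (Set.range jD ∪ Set.range jX)) = u := by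
    rw [Set.image_union, ← Set.range_comp, ← Set.range_comp]
    have e1 : ⇑B ∘ jD = e0 := funext fun i => by rw [hBc]; rfl
    have e2 : ⇑B ∘ jX = eX := funext fun i => by rw [hBc]; rfl
    rw [e1, e2, Submodule.span_union, he0s, heXs, hX0s]
  have hWspan : span F (B '' (Set.range jD ∪ Set.range jY)) = w := by
    rw [Set.image_union, ← Set.range_comp, ← Set.range_comp]
    have e1 : ⇑B ∘ jD = e0 := funext fun i => by rw [hBc]; rfl
    have e2 : ⇑B ∘ jY = eY := funext fun i => by rw [hBc]; rfl
    rw [e1, e2, Submodule.span_union, he0s, heYs, hY0s]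
  refine ⟨span F (B '' Set.range σ) ⊔ span F (Set.range fun l => B (xh l) + B (yh l)),
    ?_, ?_, ?_⟩
  · have hGi : LinearIndependent F (Sum.elim (⇑B ∘ σ) (fun l => B (xh l) + B (yh l))) := by
      apply (B.linearIndependent.comp σ hσinj).sum_type (aux_indep_diag B xh yh hyinj hxyne)
      rw [Set.range_comp]
      exact aux_disjoint_diag B xh yh hyinj hxyne _ hyT
    have hspG : span F (Set.range (Sum.elim (⇑B ∘ σ) (fun l => B (xh l) + B (yh l))))
        = span F (B '' Set.range σ) ⊔ span F (Set.range fun l => B (xh l) + B (yh l)) := by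
      rw [Set.Sum.elim_range, Submodule.span_union, Set.range_comp]
    rw [← hspG, finrank_span_eq_card hGi]
    simp only [Fintype.card_sum, Fintype.card_fin]
    omega
  · have h := aux_inter B xh yh hyinj hxyne (Set.range σ)
      (Set.range jD ∪ Set.range jX) hyT hyS
    rw [hUspan] at h
    rw [h]
    have hTS : Set.range σ ∩ (Set.range jD ∪ Set.range jX) = Set.range (Sum.elim
        (fun i : Fin p => jD (Fin.castLE hp i)) (fun i : Fin a => jX (Fin.castLE har i))) := by
      ext i0
      constructor
      · rintro ⟨⟨(i|i)|(i|i), rfl⟩, hmem⟩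
        · exact ⟨Sum.inl i, rfl⟩
        · exact ⟨Sum.inr i, rfl⟩
        · exfalso; rcases hmem with ⟨j, hj⟩|⟨j, hj⟩
          · exact Sum.noConfusion rfl rfl (heq_of_eq (Sum.inl_injective hj))
          · exact Sum.noConfusion rfl rfl (heq_of_eq (Sum.inl_injective hj))
        · exfalso; rcases hmem with ⟨j, hj⟩|⟨j, hj⟩ <;> exact Sum.noConfusion rfl rfl (heq_of_eq hj)
      · rintro ⟨(i|i), rfl⟩
        · exact ⟨⟨Sum.inl (Sum.inl i), rfl⟩, Or.inl ⟨Fin.castLE hp i, rfl⟩⟩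
        · exact ⟨⟨Sum.inl (Sum.inr i), rfl⟩, Or.inr ⟨Fin.castLE har i, rfl⟩⟩
    rw [hTS, ← Set.range_comp]
    rw [finrank_span_eq_card (B.linearIndependent.comp _ hσ1)]
    simp only [Fintype.card_sum, Fintype.card_fin]
  · have hcomm : (fun l => B (yh l) + B (xh l)) = (fun l => B (xh l) + B (yh l)) :=
      funext fun l => add_comm _ _
    have h := aux_inter B yh xh hxinj hyxne (Set.range σ)
      (Set.range jD ∪ Set.range jY) hxT hxSw
    rw [hWspan, hcomm] at h
    rw [h]
    have hσ3 : Function.Injective (Sum.elim (fun i : Fin p => jD (Fin.castLE hp i))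
        (fun i : Fin b' => jY (Fin.castLE hbr i))) := by
      apply Function.Injective.sumElim
        (hjD.comp (Fin.castLE_injective hp)) (hjY.comp (Fin.castLE_injective hbr))
      intro i j h'
      exact Sum.noConfusion rfl rfl (heq_of_eq (Sum.inl_injective h'))
    have hTS : Set.range σ ∩ (Set.range jD ∪ Set.range jY) = Set.range (Sum.elim
        (fun i : Fin p => jD (Fin.castLE hp i)) (fun i : Fin b' => jY (Fin.castLE hbr i))) := by
      ext i0
      constructor
      · rintro ⟨⟨(i|i)|(i|i), rfl⟩, hmem⟩
        · exact ⟨Sum.inl i, rfl⟩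
        · exfalso; rcases hmem with ⟨j, hj⟩|⟨j, hj⟩
          · exact Sum.noConfusion rfl rfl (heq_of_eq (Sum.inl_injective (Sum.inl_injective hj)))
          · exact Sum.noConfusion rfl rfl (heq_of_eq (Sum.inl_injective hj))
        · exact ⟨Sum.inr i, rfl⟩
        · exfalso; rcases hmem with ⟨j, hj⟩|⟨j, hj⟩ <;> exact Sum.noConfusion rfl rfl (heq_of_eq hj)
      · rintro ⟨(i|i), rfl⟩
        · exact ⟨⟨Sum.inl (Sum.inl i), rfl⟩, Or.inl ⟨Fin.castLE hp i, rfl⟩⟩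
        · exact ⟨⟨Sum.inr (Sum.inl i), rfl⟩, Or.inr ⟨Fin.castLE hbr i, rfl⟩⟩
    rw [hTS, ← Set.range_comp]
    rw [finrank_span_eq_card (B.linearIndependent.comp _ hσ3)]
    simp only [Fintype.card_sum, Fintype.card_fin]
end DistAux
section GraphAux

open Module Submodule

variable {F : Type} [Field F] {n k : ℕ} {S : Finset ℕ}

private lemma step_lb (v x w' : Submodule F (Fin n → F)) (hx : finrank F x = k) :
    finrank F ↥(x ⊓ w') + finrank F ↥(x ⊓ v) ≤ finrank F ↥(v ⊓ w') + k := by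
  have h1 := Submodule.finrank_sup_add_finrank_inf_eq (x ⊓ w') (x ⊓ v)
  have h2 : finrank F ↥((x ⊓ w') ⊔ (x ⊓ v)) ≤ k := by
    rw [← hx]; exact Submodule.finrank_mono (sup_le inf_le_left inf_le_left)
  have h3 : finrank F ↥((x ⊓ w') ⊓ (x ⊓ v)) ≤ finrank F ↥(v ⊓ w') :=
    Submodule.finrank_mono (le_inf (inf_le_right.trans inf_le_right)
      (inf_le_left.trans inf_le_right))
  omega

private lemma walk_lb (hS : S.Nonempty) (hsk : S.min' hS < k)
    {v w : {W : Submodule F (Fin n → F) // finrank F W = k}}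
    (pth : (genGrassmann F n k S).Walk v w) :
    k ≤ finrank F ↥(v.1 ⊓ w.1) + pth.length * (k - S.min' hS) := by
  induction pth with
  | nil =>
    rename_i z
    have : z.1 ⊓ z.1 = z.1 := inf_idem z.1
    rw [SimpleGraph.Walk.length_nil, this, z.2]
    omega
  | cons h q ih =>
    rename_i a b c
    obtain ⟨hne, hmem⟩ := id h
    have hs_le : S.min' hS ≤ finrank F ↥(a.1 ⊓ b.1) := S.min'_le _ hmem
    have hstep := step_lb a.1 b.1 c.1 b.2
    have hcomm : b.1 ⊓ a.1 = a.1 ⊓ b.1 := inf_comm _ _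
    rw [hcomm] at hstep
    rw [SimpleGraph.Walk.length_cons, add_mul, one_mul]
    omega

private lemma step_ub (hS : S.Nonempty) (hsub : S ⊆ Finset.range k) (hn : 2 * k ≤ n)
    (v w : {W : Submodule F (Fin n → F) // finrank F W = k}) (d' : ℕ)
    (hd1 : finrank F ↥(v.1 ⊓ w.1) ≤ d') (hd2 : d' ≤ S.min' hS)
    (hd3 : S.min' hS + d' ≤ k + finrank F ↥(v.1 ⊓ w.1)) :
    ∃ x : {W : Submodule F (Fin n → F) // finrank F W = k},
      (genGrassmann F n k S).Adj v x ∧ finrank F ↥(x.1 ⊓ w.1) = d' := by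
  have hsk : S.min' hS < k := Finset.mem_range.mp (hsub (S.min'_mem hS))
  set s := S.min' hS with hsdef
  set t := finrank F ↥(v.1 ⊓ w.1) with htdef
  have htk : t ≤ k := by
    have h := Submodule.finrank_mono (inf_le_left : v.1 ⊓ w.1 ≤ v.1)
    rw [v.2] at h
    exact h
  have hfinV : finrank F (Fin n → F) = n := by
    rw [Module.finrank_pi]; exact Fintype.card_fin n
  obtain ⟨u', h1, h2, h3⟩ := master v.1 w.1 k t (s + d' - k) (s - (s + d' - k))
    (d' - (s + d' - k)) (k - (s + d')) 0 v.2 w.2 htdef.symm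
    (by omega) (by omega) (by omega) (by rw [hfinV]; omega)
  have hk' : finrank F ↥u' = k := by omega
  have hs' : finrank F ↥(u' ⊓ v.1) = s := by omega
  have hd'' : finrank F ↥(u' ⊓ w.1) = d' := by omega
  refine ⟨⟨u', hk'⟩, ⟨?_, ?_⟩, hd''⟩
  · intro heq
    have hv : v.1 = u' := congrArg Subtype.val heq
    rw [← hv, inf_idem, v.2] at hs'
    omega
  · have hcomm : v.1 ⊓ u' = u' ⊓ v.1 := inf_comm _ _
    show finrank F ↥(v.1 ⊓ u') ∈ S
    rw [hcomm, hs']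
    exact S.min'_mem hS

private lemma walk_ub (hS : S.Nonempty) (hsub : S ⊆ Finset.range k) (hn : 2 * k ≤ n) :
    ∀ (c : ℕ) (v w : {W : Submodule F (Fin n → F) // finrank F W = k}),
      finrank F ↥(v.1 ⊓ w.1) ≤ S.min' hS →
      S.min' hS ≤ finrank F ↥(v.1 ⊓ w.1) + c * (k - S.min' hS) →
      ∃ pth : (genGrassmann F n k S).Walk v w, pth.length ≤ c + 1 := by
  have hsk : S.min' hS < k := Finset.mem_range.mp (hsub (S.min'_mem hS))
  intro c
  induction c with
  | zero =>
    intro v w h1 h2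
    have ht : finrank F ↥(v.1 ⊓ w.1) = S.min' hS := by omega
    have hne : v ≠ w := by
      intro heq
      have hv : v.1 = w.1 := congrArg Subtype.val heq
      rw [hv, inf_idem, w.2] at ht
      omega
    refine ⟨SimpleGraph.Walk.cons (show (genGrassmann F n k S).Adj v w from ⟨hne, ?_⟩) SimpleGraph.Walk.nil, by simp⟩
    rw [ht]; exact S.min'_mem hS
  | succ c ih =>
    intro v w h1 h2
    rcases le_or_gt (S.min' hS) (finrank F ↥(v.1 ⊓ w.1) + c * (k - S.min' hS)) with h|h
    · obtain ⟨p, hp⟩ := ih v w h1 h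
      exact ⟨p, by omega⟩
    · set d' := min (S.min' hS) (finrank F ↥(v.1 ⊓ w.1) + (k - S.min' hS)) with hd'def
      obtain ⟨x, hadj, hx⟩ := step_ub hS hsub hn v w d' (by omega) (by omega) (by omega)
      rw [Nat.succ_mul] at h2
      obtain ⟨p, hp⟩ := ih x w (by omega) (by omega)
      refine ⟨SimpleGraph.Walk.cons hadj p, ?_⟩
      rw [SimpleGraph.Walk.length_cons]
      omega

end GraphAux
/-- distances in generalized Grassmann graphs. -/
theorem genGrassmann_dist (F : Type) [Field F] [Fintype F] (n k : ℕ) (hn : 2 * k ≤ n)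
    (S : Finset ℕ) (hS : S.Nonempty) (hsub : S ⊆ Finset.range k) (hne : S ≠ Finset.range k)
    (v w : {W : Submodule F (Fin n → F) // Module.finrank F W = k}) :
    (Module.finrank F ↥(v.1 ⊓ w.1) < S.min' hS →
      ((genGrassmann F n k S).dist v w : ℤ) =
        ⌈((k : ℚ) - (Module.finrank F ↥(v.1 ⊓ w.1) : ℚ)) / ((k : ℚ) - (S.min' hS : ℚ))⌉) ∧
    (S.min' hS ≤ Module.finrank F ↥(v.1 ⊓ w.1) → v ≠ w →
      (genGrassmann F n k S).dist v w ≤ 2) := by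
  classical
  have hsmem : S.min' hS ∈ S := S.min'_mem hS
  have hsk : S.min' hS < k := Finset.mem_range.mp (hsub hsmem)
  have htk : Module.finrank F ↥(v.1 ⊓ w.1) ≤ k := by
    have h := Submodule.finrank_mono (inf_le_left : v.1 ⊓ w.1 ≤ v.1)
    rw [v.2] at h
    exact h
  have hfinV : Module.finrank F (Fin n → F) = n := by
    rw [Module.finrank_pi]; exact Fintype.card_fin n
  constructor
  · intro ht
    set s := S.min' hS with hsdef
    set t := Module.finrank F ↥(v.1 ⊓ w.1) with htdef
    set Q : ℚ := ((k : ℚ) - (t : ℚ)) / ((k : ℚ) - (s : ℚ)) with hQdef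
    have hksQ : (0 : ℚ) < (k : ℚ) - (s : ℚ) := by
      have h : (s : ℚ) < (k : ℚ) := by exact_mod_cast hsk
      linarith
    have hQpos : 0 < Q := by
      apply div_pos _ hksQ
      have h : (t : ℚ) < (k : ℚ) := by exact_mod_cast lt_of_lt_of_le ht hsk.le
      linarith
    have hceil_pos : 0 < ⌈Q⌉ := Int.ceil_pos.mpr hQpos
    set c : ℕ := (⌈Q⌉).toNat with hcdef
    have hc_eq : (c : ℤ) = ⌈Q⌉ := Int.toNat_of_nonneg hceil_pos.le
    have hc_pos : 1 ≤ c := by omega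
    have hcQ : ((c : ℚ)) = ((⌈Q⌉ : ℤ) : ℚ) := by exact_mod_cast hc_eq
    have hA : k - t ≤ c * (k - s) := by
      have h1 : Q ≤ (c : ℚ) := by rw [hcQ]; exact Int.le_ceil Q
      have h2 : (k : ℚ) - (t : ℚ) ≤ (c : ℚ) * ((k : ℚ) - (s : ℚ)) := by
        rw [hQdef, div_le_iff₀ hksQ] at h1
        exact h1
      have h3 : ((k - t : ℕ) : ℚ) ≤ ((c * (k - s) : ℕ) : ℚ) := by
        push_cast [Nat.cast_sub htk, Nat.cast_sub hsk.le]
        exact h2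
      exact_mod_cast h3
    have hB : c * (k - s) < (k - t) + (k - s) := by
      have h1 : (c : ℚ) < Q + 1 := by rw [hcQ]; exact Int.ceil_lt_add_one Q
      have h2 : ((c : ℚ) - 1) * ((k : ℚ) - (s : ℚ)) < (k : ℚ) - (t : ℚ) := by
        rw [← lt_div_iff₀ hksQ, ← hQdef]
        linarith
      have h3 : ((c * (k - s) : ℕ) : ℚ) < (((k - t) + (k - s) : ℕ) : ℚ) := by
        push_cast [Nat.cast_sub htk, Nat.cast_sub hsk.le]
        nlinarith [h2]
      exact_mod_cast h3
    obtain ⟨p, hplen⟩ : ∃ pth : (genGrassmann F n k S).Walk v w, pth.length ≤ c := by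
      have hsubmul : (c - 1) * (k - s) = c * (k - s) - 1 * (k - s) := Nat.sub_mul c 1 (k - s)
      rw [one_mul] at hsubmul
      obtain ⟨p, hp⟩ := walk_ub hS hsub hn (c - 1) v w ht.le
        (by rw [← hsdef, ← htdef]; omega)
      exact ⟨p, by omega⟩
    have hdist_le : (genGrassmann F n k S).dist v w ≤ c :=
      le_trans (SimpleGraph.dist_le p) hplen
    have hreach : (genGrassmann F n k S).Reachable v w := ⟨p⟩
    obtain ⟨p0, hp0⟩ := hreach.exists_walk_length_eq_dist
    have hlb := walk_lb hS hsk p0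
    rw [hp0] at hlb
    have hdist_ge : (⌈Q⌉ : ℤ) ≤ ((genGrassmann F n k S).dist v w : ℤ) := by
      apply Int.ceil_le.mpr
      rw [hQdef]
      rw [div_le_iff₀ hksQ]
      have h4 : ((k : ℕ) : ℚ) ≤ ((t + (genGrassmann F n k S).dist v w * (k - s) : ℕ) : ℚ) := by
        exact_mod_cast hlb
      push_cast [Nat.cast_sub hsk.le] at h4
      push_cast
      linarith
    have hdist_le' : ((genGrassmann F n k S).dist v w : ℤ) ≤ ⌈Q⌉ := by
      rw [← hc_eq]
      exact_mod_cast hdist_le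
    exact le_antisymm hdist_le' hdist_ge
  · intro hts hvw
    set s := S.min' hS with hsdef
    set t := Module.finrank F ↥(v.1 ⊓ w.1) with htdef
    have htlt : t < k := by
      rcases lt_or_eq_of_le htk with h|h
      · exact h
      · exfalso
        have hinf : v.1 ⊓ w.1 = v.1 := by
          apply Submodule.eq_of_le_of_finrank_eq inf_le_left
          rw [v.2, ← htdef, h]
        have hle : v.1 ≤ w.1 := by rw [← hinf]; exact inf_le_right
        have heq : v.1 = w.1 :=
          Submodule.eq_of_le_of_finrank_eq hle (v.2.trans w.2.symm)
        exact hvw (Subtype.ext heq)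
    obtain ⟨u', h1, h2, h3⟩ := master v.1 w.1 k t s 0 0 (k - t) (t - s) v.2 w.2 htdef.symm
      hts (by omega) (by omega) (by rw [hfinV]; omega)
    have hk' : Module.finrank F ↥u' = k := by omega
    have h2' : Module.finrank F ↥(u' ⊓ v.1) = s := by omega
    have h3' : Module.finrank F ↥(u' ⊓ w.1) = s := by omega
    have hadj1 : (genGrassmann F n k S).Adj v ⟨u', hk'⟩ := by
      refine ⟨?_, ?_⟩
      · intro heq
        have hv : v.1 = u' := congrArg Subtype.val heq
        rw [← hv, inf_idem, v.2] at h2'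
        omega
      · show Module.finrank F ↥(v.1 ⊓ u') ∈ S
        rw [inf_comm v.1 u', h2']
        exact hsmem
    have hadj2 : (genGrassmann F n k S).Adj ⟨u', hk'⟩ w := by
      refine ⟨?_, ?_⟩
      · intro heq
        have hv : u' = w.1 := congrArg Subtype.val heq
        rw [hv, inf_idem, w.2] at h3'
        omega
      · show Module.finrank F ↥(u' ⊓ w.1) ∈ S
        rw [h3']
        exact hsmem
    have hp : (SimpleGraph.Walk.cons hadj1
        (SimpleGraph.Walk.cons hadj2 SimpleGraph.Walk.nil)).length = 2 := by
      simp
    exact le_trans (SimpleGraph.dist_le _) (le_of_eq hp)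

end ZFPaper
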